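/- The girth of the Heawood graph is 6; that is, the shortest cycle in the Heawood graph has length 6. -/

import Mathlib

instance : DecidablePred (Even : ZMod 14 → Prop) :=
  fun i => decidable_of_iff (∃ r, i = r + r) Iff.rfl

instance : DecidablePred (Odd : ZMod 14 → Prop) :=
  fun i => decidable_of_iff (∃ r, i = 2 * r + 1) Iff.rfl

/-- The Heawood graph: the simple graph on vertex set `ZMod 14` in which distinct vertices
`i` and `j` are adjacent iff `j = i + 1`, or `j = i - 1`, or (`i` is even and `j = i + 5`),
or (`i` is odd and `j = i - 5`). -/
def heawood : SimpleGraph (ZMod 14) where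
  Adj i j := i ≠ j ∧ (j = i + 1 ∨ j = i - 1 ∨ (Even i ∧ j = i + 5) ∨ (Odd i ∧ j = i - 5))
  symm := by constructor; intro i j; revert i j; decide
  loopless := by constructor; intro i; revert i; decide

instance : DecidableRel heawood.Adj := fun i j =>
  inferInstanceAs (Decidable (i ≠ j ∧ (j = i + 1 ∨ j = i - 1 ∨ (Even i ∧ j = i + 5) ∨ (Odd i ∧ j = i - 5))))

lemma heawood_adj_parity : ∀ i j : ZMod 14, heawood.Adj i j → ¬ (Even i ↔ Even j) := by decide

lemma heawood_no4 : ∀ a b c d : ZMod 14, heawood.Adj a b → heawood.Adj b c → heawood.Adj c d →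
    heawood.Adj d a → a = c ∨ b = d := by decide

/-- An explicit 6-cycle in the Heawood graph. -/
def heawoodC6 : heawood.Walk 0 0 :=
  .cons (show heawood.Adj 0 1 by decide) (.cons (show heawood.Adj 1 2 by decide)
    (.cons (show heawood.Adj 2 3 by decide) (.cons (show heawood.Adj 3 4 by decide)
    (.cons (show heawood.Adj 4 5 by decide) (.cons (show heawood.Adj 5 0 by decide) .nil)))))

lemma heawoodC6_isCycle : heawoodC6.IsCycle := by
  rw [SimpleGraph.Walk.isCycle_def, SimpleGraph.Walk.isTrail_def]
  exact ⟨by decide, by simp [heawoodC6], by decide⟩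

lemma heawood_walk_parity {a b : ZMod 14} (w : heawood.Walk a b) :
    Even w.length ↔ (Even a ↔ Even b) := by
  induction w with
  | nil => simp
  | @cons u v _ h p ih =>
    have := heawood_adj_parity u v h
    rw [SimpleGraph.Walk.length_cons, Nat.even_add_one, ih]
    tauto

lemma heawood_no_four {a : ZMod 14} (w : heawood.Walk a a) (hw : w.IsCycle) :
    w.length ≠ 4 := by
  intro h
  cases w with
  | nil => simp at h
  | cons h1 p =>
    cases p with
    | nil => simp at h
    | cons h2 q =>
      cases q with
      | nil => simp at h
      | cons h3 r =>
        cases r with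
        | nil => simp at h
        | cons h4 s =>
          cases s with
          | cons h5 t => simp [SimpleGraph.Walk.length_cons] at h
          | nil =>
            have hnd := hw.2
            simp [SimpleGraph.Walk.support_cons] at hnd
            rcases heawood_no4 _ _ _ _ h1 h2 h3 h4 with h' | h' <;> simp_all

/-- The girth of the Heawood graph (the minimal length of a cycle, `⊤` if acyclic) is `6`. -/
theorem heawood_girth : heawood.egirth = 6 := by
  apply le_antisymm
  · exact iInf_le_of_le 0 <| iInf_le_of_le heawoodC6 <|
      iInf_le_of_le heawoodC6_isCycle <| by norm_num [heawoodC6]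
  · rw [SimpleGraph.le_egirth]
    intro a w hw
    have h3 := hw.three_le_length
    have hev : Even w.length := (heawood_walk_parity w).mpr Iff.rfl
    have h4 := heawood_no_four w hw
    obtain ⟨k, hk⟩ := hev
    have : 6 ≤ w.length := by omega
    exact_mod_cast this
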